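/- arXiv:2302.13351 — 4 statements merged into one kernel-verified Lean document; each statement's English description precedes it below -/
import Mathlib

section
/- For the complete bipartite graph K_{2,n} with n ≥ 3, the minimum size of a local identifying code equals 2, while the minimum size of a locating-dominating code (and of an identifying code) equals n. -/
open SimpleGraph

/-- The closed neighbourhood of a vertex. -/
def cnbr {V : Type*} (G : SimpleGraph V) (u : V) : Set V := insert u (G.neighborSet u)

/-- The `I`-set of a vertex with respect to a code `C`. -/
def iset {V : Type*} (G : SimpleGraph V) (C : Set V) (u : V) : Set V := cnbr G u ∩ C

/-- `C` is a dominating set (covering code). -/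
def IsDominating {V : Type*} (G : SimpleGraph V) (C : Set V) : Prop :=
  ∀ u, (iset G C u).Nonempty

/-- `C` is a local identifying code. -/
def IsLocalID {V : Type*} (G : SimpleGraph V) (C : Set V) : Prop :=
  IsDominating G C ∧ ∀ u v, G.Adj u v → iset G C u ≠ iset G C v

/-- `C` is a local locating-dominating code. -/
def IsLocalLD {V : Type*} (G : SimpleGraph V) (C : Set V) : Prop :=
  IsDominating G C ∧ ∀ u v, G.Adj u v → u ∉ C → v ∉ C → iset G C u ≠ iset G C v

/-- `C` is an identifying code. -/
def IsID {V : Type*} (G : SimpleGraph V) (C : Set V) : Prop :=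
  IsDominating G C ∧ ∀ u v : V, u ≠ v → iset G C u ≠ iset G C v

/-- `C` is a locating-dominating code. -/
def IsLD {V : Type*} (G : SimpleGraph V) (C : Set V) : Prop :=
  IsDominating G C ∧ ∀ u v : V, u ≠ v → u ∉ C → v ∉ C → iset G C u ≠ iset G C v

/-- The share of a codeword `c`. -/
noncomputable def share {V : Type*} (G : SimpleGraph V) (C : Set V) (c : V) : ℝ :=
  ∑ᶠ u ∈ cnbr G c, (1 : ℝ) / (iset G C u).ncard

/-!
The two vertices of the small side form a local identifying code: each sees only itself, while
every vertex of the large side sees both. A single codeword never suffices, as two adjacent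
vertices would both have it as their `I`-set.

For locating-dominating codes, all non-codewords of the large side have the same `I`-set (the
codewords of the small side), so at most one of them is missing from the code, and it is dominated
by a codeword of the small side; this yields an injection of the large side into the code.
Conversely one vertex of the small side together with all but one vertex of the large side is
an identifying code of size `n`, the third vertex of the large side separating the rest.
-/

section Codes

variable {V : Type*} {G : SimpleGraph V} {C : Set V}

@[simp]
lemma mem_iset {u w : V} : w ∈ iset G C u ↔ (w = u ∨ G.Adj u w) ∧ w ∈ C := by
  simp [iset, cnbr]

lemma IsID.isLD (hC : IsID G C) : IsLD G C :=
  ⟨hC.1, fun u v huv _ _ => hC.2 u v huv⟩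

lemma IsLocalID.one_lt_ncard [Finite V] (hC : IsLocalID G C) {u v : V} (huv : G.Adj u v) :
    1 < C.ncard := by
  rw [Set.one_lt_ncard_iff_nontrivial, ← Set.not_subsingleton_iff]
  intro hsub
  obtain ⟨x, hx⟩ := hC.1 u
  obtain ⟨y, hy⟩ := hC.1 v
  have hu : iset G C u = {x} := (hsub.anti Set.inter_subset_right).eq_singleton_of_mem hx
  have hv : iset G C v = {y} := (hsub.anti Set.inter_subset_right).eq_singleton_of_mem hy
  exact hC.2 u v huv (by rw [hu, hv, hsub hx.2 hy.2])

end Codes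

section CompleteBipartite

open Sum

variable {α β : Type*}

lemma isLocalID_range_inl [Nontrivial α] :
    IsLocalID (completeBipartiteGraph α β) (Set.range inl) := by
  refine ⟨?_, ?_⟩
  · rintro (a | b)
    · exact ⟨inl a, by simp⟩
    · obtain ⟨a⟩ := ‹Nontrivial α›.to_nonempty
      exact ⟨inl a, by simp⟩
  · rintro (a | b) (a' | b') huv <;> simp at huv
    · obtain ⟨a', ha'⟩ := exists_ne a
      exact (ne_of_mem_of_not_mem' (a := inl a') (by simp) (by simp [ha'])).symm
    · obtain ⟨a, ha⟩ := exists_ne a'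
      exact ne_of_mem_of_not_mem' (a := inl a) (by simp) (by simp [ha])

lemma iset_inr_of_notMem {C : Set (α ⊕ β)} {b : β} (hb : inr b ∉ C) :
    iset (completeBipartiteGraph α β) C (inr b) = Set.range inl ∩ C := by
  ext (a | b') <;> simp
  rintro rfl h
  exact hb h

lemma IsLD.natCard_le_ncard [Finite α] [Finite β] {C : Set (α ⊕ β)}
    (hC : IsLD (completeBipartiteGraph α β) C) : Nat.card β ≤ C.ncard := by
  classical
  let f : β → α ⊕ β := fun b => if inr b ∈ C then inr b else (hC.1 (inr b)).some
  have hf_mem : ∀ b, f b ∈ C := by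
    intro b
    by_cases hb : inr b ∈ C
    · simp [f, hb]
    · simpa [f, hb] using (hC.1 (inr b)).some_mem.2
  have hf_inr : ∀ b b', f b = inr b' → b = b' := by
    intro b b' h
    by_cases hb : inr b ∈ C
    · simpa [f, hb] using h
    · have := (hC.1 (inr b)).some_mem
      simp only [f, hb, if_false] at h
      rw [h] at this
      exact (by simpa [eq_comm] using this : b = b' ∧ _).1
  have hf_inj : f.Injective := by
    intro b b' h
    by_cases hb : inr b ∈ C
    · exact (hf_inr b' b (h.symm.trans (if_pos hb))).symm
    by_cases hb' : inr b' ∈ C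
    · exact hf_inr b b' (h.trans (if_pos hb'))
    by_contra hne
    exact hC.2 _ _ (by simpa using hne) hb hb'
      (by rw [iset_inr_of_notMem hb, iset_inr_of_notMem hb'])
  calc Nat.card β = (Set.range f).ncard := (Set.ncard_range_of_injective hf_inj).symm
    _ ≤ C.ncard := Set.ncard_le_ncard (Set.range_subset_iff.2 hf_mem)

def idCode (b₀ : β) : Set (Fin 2 ⊕ β) := insert (inl 0) (inr '' {b₀}ᶜ)

lemma ncard_idCode [Finite β] (b₀ : β) : (idCode b₀).ncard = Nat.card β := by
  have : Nonempty β := ⟨b₀⟩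
  have : 0 < Nat.card β := Nat.card_pos
  rw [idCode, Set.ncard_insert_of_notMem (by simp),
    Set.ncard_image_of_injective _ inr_injective, Set.ncard_compl, Set.ncard_singleton]
  omega

lemma isID_idCode (hβ : 2 < Nat.card β) (b₀ : β) :
    IsID (completeBipartiteGraph (Fin 2) β) (idCode b₀) := by
  have hthird : ∀ b, ∃ c, c ≠ b₀ ∧ c ≠ b := by
    intro b
    have : Finite β := Nat.finite_of_card_ne_zero (by omega)
    obtain ⟨c, -, hc⟩ := Set.exists_mem_notMem_of_ncard_lt_ncard (s := {b₀, b})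
      (t := Set.univ) (by rw [Set.ncard_univ]; exact (Set.ncard_insert_le _ _).trans_lt (by simpa))
    exact ⟨c, by simpa [not_or] using hc⟩
  refine ⟨?_, ?_⟩
  · rintro (a | b)
    · fin_cases a
      · exact ⟨inl 0, by simp [idCode]⟩
      · obtain ⟨c, hc, -⟩ := hthird b₀
        exact ⟨inr c, by simp [idCode, hc]⟩
    · exact ⟨inl 0, by simp [idCode]⟩
  · intro u v huv h
    have key := fun w => Set.ext_iff.1 h w
    rcases u with a | b <;> rcases v with a' | b'
    · have := key (inl 0)
      fin_cases a <;> fin_cases a' <;> simp [idCode] at huv this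
    · obtain ⟨c, hc₀, hcb⟩ := hthird b'
      simpa [idCode, hc₀, hcb] using key (inr c)
    · obtain ⟨c, hc₀, hcb⟩ := hthird b
      simpa [idCode, hc₀, hcb] using key (inr c)
    · have hbb' : b ≠ b' := by simpa using huv
      by_cases hb : b = b₀
      · subst hb
        simpa [idCode, hbb', hbb'.symm] using key (inr b')
      · simpa [idCode, hb, hbb'] using key (inr b)

end CompleteBipartite

/-- In `K_{2,n}` with `n ≥ 3` the minimum size of a local identifying code is `2`,
while the minimum sizes of locating-dominating and identifying codes are both `n`. -/
theorem stmt4 (n : ℕ) (hn : 3 ≤ n) :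
    IsLeast {k : ℕ | ∃ C : Set (Fin 2 ⊕ Fin n),
      IsLocalID (completeBipartiteGraph (Fin 2) (Fin n)) C ∧ C.ncard = k} 2 ∧
    IsLeast {k : ℕ | ∃ C : Set (Fin 2 ⊕ Fin n),
      IsLD (completeBipartiteGraph (Fin 2) (Fin n)) C ∧ C.ncard = k} n ∧
    IsLeast {k : ℕ | ∃ C : Set (Fin 2 ⊕ Fin n),
      IsID (completeBipartiteGraph (Fin 2) (Fin n)) C ∧ C.ncard = k} n := by
  let b₀ : Fin n := ⟨0, by omega⟩
  have hID := isID_idCode (by rw [Nat.card_eq_fintype_card, Fintype.card_fin]; omega) b₀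
  have hcard : (idCode b₀).ncard = n := by simpa using ncard_idCode b₀
  refine ⟨⟨⟨_, isLocalID_range_inl, by simp [Set.ncard_range_of_injective Sum.inl_injective]⟩, ?_⟩,
    ⟨⟨_, hID.isLD, hcard⟩, ?_⟩, ⟨⟨_, hID, hcard⟩, ?_⟩⟩ <;> rintro k ⟨C, hC, rfl⟩
  · exact hC.one_lt_ncard (u := Sum.inl 0) (v := Sum.inr b₀) (by simp)
  · simpa using hC.natCard_le_ncard
  · simpa using hC.isLD.natCard_le_ncard
end

section
/- In the binary hypercube F_2^3 (vertices are binary words of length 3, adjacent iff Hamming distance 1), a code is an identifying code if and only if it is a local identifying code. -/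
open SimpleGraph

/-- The binary `n`-dimensional hypercube. -/
def cube (n : ℕ) : SimpleGraph (Fin n → ZMod 2) where
  Adj x y := hammingDist x y = 1
  symm := ⟨fun x y h => by have h' : hammingDist x y = 1 := h; show hammingDist y x = 1; rw [hammingDist_comm]; exact h'⟩
  loopless := ⟨fun x h => by have h' : hammingDist x x = 1 := h; rw [hammingDist_self] at h'; exact absurd h' (by norm_num)⟩

/-!
If `I(u) = I(v)`, then `C` misses `N[u] ∆ N[v]`, hence also `N[w] ∆ N[w']` for every pair with
`N[w] ∆ N[w'] ⊆ N[u] ∆ N[v]`. In `F_2^3` antipodal vertices have disjoint closed neighbourhoods,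
so their `I`-sets can only agree when empty; and if `v = u + e_i + e_j`, then for `k ∉ {i, j}` the
edge `w = u + e_i`, `w' = w + e_k` has `N[w] ∆ N[w'] = {u, v, u + e_k, v + e_k} ⊆ N[u] ∆ N[v]`.
So a code separating the ends of every edge separates all vertices.
-/

open scoped symmDiff

section ClosedNeighbourhood

variable {V : Type*} (G : SimpleGraph V)

instance [DecidableEq V] [DecidableRel G.Adj] (u x : V) : Decidable (x ∈ cnbr G u) :=
  inferInstanceAs (Decidable (x ∈ insert u (G.neighborSet u)))

theorem iset_eq_iset_iff {C : Set V} {u v : V} :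
    iset G C u = iset G C v ↔ Disjoint C (cnbr G u ∆ cnbr G v) := by
  rw [iset, iset, ← symmDiff_eq_bot, ← Set.inter_symmDiff_distrib_right, Set.bot_eq_empty,
    ← Set.disjoint_iff_inter_eq_empty, disjoint_comm]

def SymmDiffContainsEdgeSymmDiff : Prop :=
  ∀ u v, u ≠ v → (cnbr G u ∩ cnbr G v).Nonempty →
    ∃ w w', G.Adj w w' ∧ cnbr G w ∆ cnbr G w' ⊆ cnbr G u ∆ cnbr G v

variable {G} {C : Set V}

theorem IsID.isLocalID (h : IsID G C) : IsLocalID G C :=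
  ⟨h.1, fun u v huv => h.2 u v huv.ne⟩

theorem IsLocalID.isID (hG : SymmDiffContainsEdgeSymmDiff G) (h : IsLocalID G C) : IsID G C := by
  refine ⟨h.1, fun u v huv hI => ?_⟩
  obtain ⟨x, hxu, hxC⟩ := h.1 u
  have hxv : x ∈ iset G C v := hI ▸ ⟨hxu, hxC⟩
  obtain ⟨w, w', hww', hsub⟩ := hG u v huv ⟨x, hxu, hxv.1⟩
  exact h.2 w w' hww' <| (iset_eq_iset_iff G).2 <| ((iset_eq_iset_iff G).1 hI).mono_right hsub

theorem isID_iff_isLocalID (hG : SymmDiffContainsEdgeSymmDiff G) : IsID G C ↔ IsLocalID G C :=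
  ⟨IsID.isLocalID, IsLocalID.isID hG⟩

end ClosedNeighbourhood

instance (n : ℕ) : DecidableRel (cube n).Adj :=
  fun x y => inferInstanceAs (Decidable (hammingDist x y = 1))

set_option synthInstance.maxSize 2000 in
theorem cube_three_symmDiffContainsEdgeSymmDiff : SymmDiffContainsEdgeSymmDiff (cube 3) := by
  simp only [SymmDiffContainsEdgeSymmDiff, Set.Nonempty, Set.subset_def, Set.mem_inter_iff,
    Set.mem_symmDiff]
  decide +kernel

/-- In `F_2^3` a code is identifying iff it is local identifying. -/
theorem stmt5 (C : Set (Fin 3 → ZMod 2)) : IsID (cube 3) C ↔ IsLocalID (cube 3) C :=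
  isID_iff_isLocalID cube_three_symmDiffContainsEdgeSymmDiff
end

section
/- Every local locating-dominating code in the king grid contains at least 3 codewords in every 4×4 square of vertices; consequently its density is at least 3/16. -/
open SimpleGraph

/-- The king grid. -/
def kingGrid : SimpleGraph (ℤ × ℤ) where
  Adj u v := u ≠ v ∧ |u.1 - v.1| ≤ 1 ∧ |u.2 - v.2| ≤ 1
  symm := ⟨by
    rintro u v ⟨h1, h2, h3⟩
    exact ⟨h1.symm, by rwa [abs_sub_comm], by rwa [abs_sub_comm]⟩⟩
  loopless := ⟨fun u h => h.1 rfl⟩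

/-!
The central `2 × 2` block of a `4 × 4` square is a 4-clique of the king grid whose closed
neighbourhoods stay inside the square, so its `I`-sets are subsets of the codewords `K` in the
square. The non-codewords of a clique have pairwise distinct, nonempty `I`-sets, each containing
every codeword of the clique; if `|K| ≤ 2` there are not enough such sets for four vertices.
-/

namespace IsLocalLD

variable {V : Type*} {G : SimpleGraph V} {C Q K : Set V}

lemma mem_cnbr_of_isClique (hQ : G.IsClique Q) {u v : V} (hu : u ∈ Q) (hv : v ∈ Q) :
    v ∈ cnbr G u := by
  obtain rfl | huv := eq_or_ne v u
  · exact Set.mem_insert v _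
  · exact Set.mem_insert_of_mem u (hQ hu hv huv.symm)

lemma inter_subset_iset_of_isClique (hQ : G.IsClique Q) {u : V} (hu : u ∈ Q) :
    Q ∩ C ⊆ iset G C u :=
  fun _ hv => ⟨mem_cnbr_of_isClique hQ hu hv.1, hv.2⟩

lemma injOn_iset (hC : IsLocalLD G C) (hQ : G.IsClique Q) : Set.InjOn (iset G C) (Q \ C) := by
  intro u hu v hv huv
  by_contra hne
  exact hC.2 u v (hQ hu.1 hv.1 hne) hu.2 hv.2 huv

theorem three_le_ncard_of_isClique (hC : IsLocalLD G C) (hQ : G.IsClique Q) (hQ4 : 4 ≤ Q.ncard)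
    (hK : K.Finite) (hQK : ∀ q ∈ Q, iset G C q ⊆ K) : 3 ≤ K.ncard := by
  have hQfin : Q.Finite := Set.finite_of_ncard_pos (by omega)
  have hAK : Q ∩ C ⊆ K := fun q hq => hQK q hq.1 ⟨Set.mem_insert q _, hq.2⟩
  have hB : (Q \ C).ncard ≤ 2 ^ (K.ncard - (Q ∩ C).ncard) := by
    rw [← Set.ncard_sdiff hAK (hK.subset hAK), ← Set.ncard_powerset _ hK.sdiff]
    refine Set.ncard_le_ncard_of_injOn (fun q => iset G C q \ (Q ∩ C))
      (fun q hq => Set.sdiff_subset_sdiff_left (hQK q hq.1)) ?_ hK.sdiff.powerset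
    intro u hu v hv huv
    apply hC.injOn_iset hQ hu hv
    rw [← Set.sdiff_union_of_subset (inter_subset_iset_of_isClique hQ hu.1),
      ← Set.sdiff_union_of_subset (inter_subset_iset_of_isClique hQ hv.1)]
    exact congrArg (· ∪ Q ∩ C) huv
  have hB0 : (Q ∩ C).ncard = 0 → (Q \ C).ncard ≤ 2 ^ K.ncard - 1 := by
    intro h
    rw [← Set.ncard_powerset K hK,
      ← Set.ncard_sdiff_singleton_of_mem (Set.mem_powerset (Set.empty_subset K))]
    exact Set.ncard_le_ncard_of_injOn (iset G C)
      (fun q hq => ⟨hQK q hq.1, (hC.1 q).ne_empty⟩) (hC.injOn_iset hQ) hK.powerset.sdiff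
  -- For `|K| ≤ 2` and `m` codewords in `Q`: `m + 2 ^ (|K| - m) ≤ 3`, and `2 ^ |K| - 1 ≤ 3`.
  have hsplit := Set.ncard_inter_add_ncard_sdiff_eq_ncard Q C hQfin
  have hAk := Set.ncard_le_ncard hAK hK
  by_contra!
  interval_cases K.ncard <;> interval_cases (Q ∩ C).ncard <;> simp at hB hB0 <;> omega

end IsLocalLD

lemma kingGrid_isClique_prod_pair (x y : ℤ) :
    kingGrid.IsClique ({x, x + 1} ×ˢ {y, y + 1} : Set (ℤ × ℤ)) := by
  rintro ⟨u₁, u₂⟩ ⟨hu₁, hu₂⟩ ⟨v₁, v₂⟩ ⟨hv₁, hv₂⟩ huv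
  simp only [Set.mem_insert_iff, Set.mem_singleton_iff] at hu₁ hu₂ hv₁ hv₂
  refine ⟨huv, abs_le.2 ⟨?_, ?_⟩, abs_le.2 ⟨?_, ?_⟩⟩ <;> dsimp only <;> omega

lemma cnbr_kingGrid_subset (p : ℤ × ℤ) :
    cnbr kingGrid p ⊆ Set.Icc (p.1 - 1) (p.1 + 1) ×ˢ Set.Icc (p.2 - 1) (p.2 + 1) := by
  rintro q (rfl | ⟨-, h₁, h₂⟩)
  · exact ⟨⟨by omega, by omega⟩, ⟨by omega, by omega⟩⟩
  · rw [abs_le] at h₁ h₂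
    exact ⟨⟨by omega, by omega⟩, ⟨by omega, by omega⟩⟩

/-- Every local locating-dominating code in the king grid contains at least `3` codewords
in every `4 × 4` square of vertices. -/
theorem stmt16 (C : Set (ℤ × ℤ)) (hC : IsLocalLD kingGrid C) (a b : ℤ) :
    3 ≤ (C ∩ {p : ℤ × ℤ | a ≤ p.1 ∧ p.1 ≤ a + 3 ∧ b ≤ p.2 ∧ p.2 ≤ b + 3}).ncard := by
  refine hC.three_le_ncard_of_isClique (kingGrid_isClique_prod_pair (a + 1) (b + 1)) ?_ ?_ ?_
  · rw [Set.ncard_prod, Set.ncard_pair (by omega), Set.ncard_pair (by omega)]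
  · refine Set.Finite.inter_of_right (((Set.finite_Icc a (a + 3)).prod
      (Set.finite_Icc b (b + 3))).subset ?_) C
    rintro p ⟨h₁, h₂, h₃, h₄⟩
    exact ⟨⟨h₁, h₂⟩, ⟨h₃, h₄⟩⟩
  · rintro q hq p ⟨hp, hpC⟩
    have hp' := cnbr_kingGrid_subset q hp
    simp only [Set.mem_prod, Set.mem_insert_iff, Set.mem_singleton_iff, Set.mem_Icc] at hq hp'
    exact ⟨hpC, by omega, by omega, by omega, by omega⟩
end

section
/- Let C be a local identifying code in the triangular grid. Then the share s(c) of every codeword c ∈ C is at most 4. -/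
/-!
Let `c` be a codeword with neighbours `p₀, …, p₅` in cyclic order. The set `I(c)` consists of
`c` and the codewords among the `pᵢ`, while `I(pᵢ)` contains `c`, the codewords among
`pᵢ₋₁, pᵢ, pᵢ₊₁`, and at least one further codeword whenever one of the three neighbours of `pᵢ`
outside `N[c]` is a codeword. Hence the share of `c` is bounded by a function of twelve bits.
Separating `c` from `pᵢ`, and `pᵢ` from `pᵢ₊₁`, forces a codeword in the symmetric difference
of the closed neighbourhoods, which gives twelve clauses on these bits; under these clauses the
bound is at most `4`, as a check of all `2¹²` assignments shows.
-/

open SimpleGraph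

/-- The triangular grid. -/
def triGrid : SimpleGraph (ℤ × ℤ) where
  Adj u v := u - v = (1, 0) ∨ u - v = (-1, 0) ∨ u - v = (0, 1) ∨ u - v = (0, -1) ∨
    u - v = (1, 1) ∨ u - v = (-1, -1)
  symm := by
    constructor
    intro u v h
    have hvu : v - u = -(u - v) := by ring
    rcases h with h | h | h | h | h | h <;> rw [hvu, h] <;> simp [Prod.ext_iff]
  loopless := by
    constructor
    intro u h
    simp [Prod.ext_iff, sub_self] at h


-- The six neighbour directions in cyclic order: `hexDir i` and `hexDir (i + 1)` are adjacent.
def hexDir : Fin 6 → ℤ × ℤ := ![(1, 0), (1, 1), (0, 1), (-1, 0), (-1, -1), (0, -1)]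

def hexBall (u : ℤ × ℤ) : Finset (ℤ × ℤ) := insert u (Finset.univ.image (u + hexDir ·))

lemma hexDir_add_hexDir_add_two (i : Fin 6) : hexDir i + hexDir (i + 2) = hexDir (i + 1) := by
  fin_cases i <;> rfl

lemma hexDir_add_hexDir_add_three (i : Fin 6) : hexDir i + hexDir (i + 3) = 0 := by
  fin_cases i <;> rfl

lemma hexDir_add_hexDir_add_four (i : Fin 6) : hexDir i + hexDir (i + 4) = hexDir (i - 1) := by
  fin_cases i <;> rfl

lemma fin6_add_five_eq_sub_one (i : Fin 6) : i + 5 = i - 1 := by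
  revert i; decide

lemma triGrid_adj_iff {u v : ℤ × ℤ} : triGrid.Adj u v ↔ ∃ i, v = u + hexDir i := by
  simp only [triGrid, hexDir, Prod.ext_iff, Prod.fst_sub, Prod.snd_sub, Prod.fst_add, Prod.snd_add,
    Fin.exists_fin_succ, Fin.isValue, Matrix.cons_val_zero, Matrix.cons_val_succ,
    Matrix.cons_val_fin_one, exists_const, Int.reduceNeg, add_zero]
  omega

lemma triGrid_adj_add_left_iff {c u v : ℤ × ℤ} :
    triGrid.Adj (c + u) (c + v) ↔ triGrid.Adj u v := by
  simp only [triGrid_adj_iff, add_assoc, add_right_inj]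

lemma cnbr_triGrid (u : ℤ × ℤ) : cnbr triGrid u = hexBall u := by
  ext v
  simp [cnbr, hexBall, triGrid_adj_iff, eq_comm]

lemma mem_hexBall_add_left_iff {c u v : ℤ × ℤ} : v ∈ hexBall (c + u) ↔ v - c ∈ hexBall u := by
  simp [hexBall, eq_sub_iff_add_eq', sub_eq_iff_eq_add', add_assoc]

lemma sum_hexBall {M : Type*} [AddCommMonoid M] (f : ℤ × ℤ → M) (u : ℤ × ℤ) :
    ∑ v ∈ hexBall u, f v = f u + ∑ i, f (u + hexDir i) := by
  have hdir : Function.Injective hexDir := by decide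
  rw [hexBall, Finset.sum_insert, Finset.sum_image]
  · intro i _ j _ h
    exact hdir (add_left_cancel h)
  · simp only [Finset.mem_image, Finset.mem_univ, true_and, add_eq_left, not_exists]
    decide

lemma symmDiff_hexBall_zero_hexDir (i : Fin 6) :
    symmDiff (hexBall 0) (hexBall (hexDir i)) ⊆
      {hexDir (i + 2), hexDir (i + 3), hexDir (i + 4),
        hexDir i + hexDir (i - 1), hexDir i + hexDir i, hexDir i + hexDir (i + 1)} := by
  revert i; decide

lemma symmDiff_hexBall_hexDir_hexDir_add_one (i : Fin 6) :
    symmDiff (hexBall (hexDir i)) (hexBall (hexDir (i + 1))) ⊆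
      {hexDir (i - 1), hexDir (i + 2),
        hexDir i + hexDir (i - 1), hexDir i + hexDir i, hexDir i + hexDir (i + 1),
        hexDir (i + 1) + hexDir i, hexDir (i + 1) + hexDir (i + 1),
        hexDir (i + 1) + hexDir (i + 2)} := by
  revert i; decide

lemma IsLocalID.exists_mem_symmDiff_cnbr {V : Type*} {G : SimpleGraph V} {C : Set V}
    (hC : IsLocalID G C) {u v : V} (huv : G.Adj u v) :
    ∃ x ∈ C, x ∈ symmDiff (cnbr G u) (cnbr G v) := by
  by_contra! hx
  refine hC.2 u v huv (Set.ext fun x => ?_)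
  simp only [iset, Set.mem_inter_iff]
  constructor <;> rintro ⟨hxu, hxC⟩ <;> refine ⟨?_, hxC⟩ <;> by_contra hxv
  · exact hx x hxC (Set.mem_symmDiff.2 (.inl ⟨hxu, hxv⟩))
  · exact hx x hxC (Set.mem_symmDiff.2 (.inr ⟨hxu, hxv⟩))

lemma IsLocalID.exists_add_mem_of_symmDiff_hexBall_subset {C : Set (ℤ × ℤ)}
    (hC : IsLocalID triGrid C) (c : ℤ × ℤ) {u v : ℤ × ℤ} (huv : triGrid.Adj u v)
    {S : Finset (ℤ × ℤ)} (hS : symmDiff (hexBall u) (hexBall v) ⊆ S) : ∃ y ∈ S, c + y ∈ C := by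
  obtain ⟨x, hxC, hx⟩ := hC.exists_mem_symmDiff_cnbr (triGrid_adj_add_left_iff.2 huv)
  refine ⟨x - c, hS ?_, by simpa⟩
  simpa [cnbr_triGrid, Set.mem_symmDiff, Finset.mem_symmDiff, mem_hexBall_add_left_iff] using hx

open Classical in
noncomputable def nbrPattern (C : Set (ℤ × ℤ)) (c : ℤ × ℤ) (i : Fin 6) : Bool :=
  decide (c + hexDir i ∈ C)

-- Whether `c + hexDir i` has a codeword among its three neighbours outside `N[c]`.
open Classical in
noncomputable def outerPattern (C : Set (ℤ × ℤ)) (c : ℤ × ℤ) (i : Fin 6) : Bool :=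
  decide (c + (hexDir i + hexDir (i - 1)) ∈ C) || decide (c + (hexDir i + hexDir i) ∈ C) ||
    decide (c + (hexDir i + hexDir (i + 1)) ∈ C)

lemma IsLocalID.pattern_center {C : Set (ℤ × ℤ)} (hC : IsLocalID triGrid C) (c : ℤ × ℤ)
    (i : Fin 6) : (nbrPattern C c (i + 2) || nbrPattern C c (i + 3) || nbrPattern C c (i + 4) ||
      outerPattern C c i) = true := by
  obtain ⟨y, hy, hyC⟩ := hC.exists_add_mem_of_symmDiff_hexBall_subset c
    (triGrid_adj_iff.2 ⟨i, (zero_add _).symm⟩) (symmDiff_hexBall_zero_hexDir i)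
  simp only [Finset.mem_insert, Finset.mem_singleton] at hy
  rcases hy with rfl | rfl | rfl | rfl | rfl | rfl <;> simp [nbrPattern, outerPattern, hyC]

lemma IsLocalID.pattern_ring {C : Set (ℤ × ℤ)} (hC : IsLocalID triGrid C) (c : ℤ × ℤ)
    (i : Fin 6) : (nbrPattern C c (i - 1) || nbrPattern C c (i + 2) || outerPattern C c i ||
      outerPattern C c (i + 1)) = true := by
  obtain ⟨y, hy, hyC⟩ := hC.exists_add_mem_of_symmDiff_hexBall_subset c
    (triGrid_adj_iff.2 ⟨i + 2, (hexDir_add_hexDir_add_two i).symm⟩)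
    (symmDiff_hexBall_hexDir_hexDir_add_one i)
  simp only [Finset.mem_insert, Finset.mem_singleton] at hy
  rcases hy with rfl | rfl | rfl | rfl | rfl | rfl | rfl | rfl <;>
    simp [nbrPattern, outerPattern, hyC, add_assoc]

open Classical in
lemma ncard_iset_triGrid (C : Set (ℤ × ℤ)) (u : ℤ × ℤ) :
    (iset triGrid C u).ncard =
      (decide (u ∈ C)).toNat + ∑ i, (decide (u + hexDir i ∈ C)).toNat := by
  have hfilter : iset triGrid C u = ↑((hexBall u).filter (· ∈ C)) := by
    ext; simp [iset, cnbr_triGrid]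
  rw [hfilter, Set.ncard_coe_finset, Finset.card_filter, sum_hexBall]
  simp only [Bool.toNat, Bool.cond_decide]

lemma ncard_iset_center {C : Set (ℤ × ℤ)} {c : ℤ × ℤ} (hc : c ∈ C) :
    (iset triGrid C c).ncard = 1 + ∑ i, (nbrPattern C c i).toNat := by
  simp [ncard_iset_triGrid, nbrPattern, hc]

lemma Bool.toNat_or_or_le (a b c : Bool) : (a || b || c).toNat ≤ a.toNat + b.toNat + c.toNat := by
  cases a <;> cases b <;> cases c <;> decide

lemma ncard_iset_hexDir_ge {C : Set (ℤ × ℤ)} {c : ℤ × ℤ} (hc : c ∈ C) (i : Fin 6) :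
    1 + (nbrPattern C c (i - 1)).toNat + (nbrPattern C c i).toNat +
      (nbrPattern C c (i + 1)).toNat + (outerPattern C c i).toNat ≤
      (iset triGrid C (c + hexDir i)).ncard := by
  classical
  have houter := Bool.toNat_or_or_le (decide (c + (hexDir i + hexDir (i - 1)) ∈ C))
    (decide (c + (hexDir i + hexDir i) ∈ C)) (decide (c + (hexDir i + hexDir (i + 1)) ∈ C))
  rw [ncard_iset_triGrid, ← Equiv.sum_comp (Equiv.addLeft i), Fin.sum_univ_six]
  simp only [Equiv.coe_addLeft, add_zero, add_assoc, hexDir_add_hexDir_add_two,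
    hexDir_add_hexDir_add_three, hexDir_add_hexDir_add_four, fin6_add_five_eq_sub_one]
  simp only [nbrPattern, outerPattern, hc, decide_true, Bool.toNat_true] at houter ⊢
  omega

lemma share_triGrid (C : Set (ℤ × ℤ)) (c : ℤ × ℤ) :
    share triGrid C c = 1 / (iset triGrid C c).ncard +
      ∑ i, 1 / ((iset triGrid C (c + hexDir i)).ncard : ℝ) := by
  rw [share, cnbr_triGrid, finsum_mem_coe_finset, sum_hexBall]

-- Scaled by `420 = lcm(1, …, 7)`, so that every quotient `420 / m` occurring here is exact.
def SharePatternBound (b o : Fin 6 → Bool) : Prop :=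
  (∀ i, (b (i + 2) || b (i + 3) || b (i + 4) || o i) = true) →
  (∀ i, (b (i - 1) || b (i + 2) || o i || o (i + 1)) = true) →
  420 / (1 + ∑ i, (b i).toNat) +
    ∑ i, 420 / (1 + (b (i - 1)).toNat + (b i).toNat + (b (i + 1)).toNat + (o i).toNat) ≤ 4 * 420

lemma sharePatternBound_vecCons : ∀ b₀ b₁ b₂ b₃ b₄ b₅ o₀ o₁ o₂ o₃ o₄ o₅ : Bool,
    SharePatternBound ![b₀, b₁, b₂, b₃, b₄, b₅] ![o₀, o₁, o₂, o₃, o₄, o₅] := by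
  unfold SharePatternBound
  decide

lemma sharePatternBound (b o : Fin 6 → Bool) : SharePatternBound b o := by
  have hb : b = ![b 0, b 1, b 2, b 3, b 4, b 5] := by ext i; fin_cases i <;> rfl
  have ho : o = ![o 0, o 1, o 2, o 3, o 4, o 5] := by ext i; fin_cases i <;> rfl
  rw [hb, ho]
  apply sharePatternBound_vecCons

lemma one_div_natCast_eq_div_420 {m : ℕ} (h0 : 0 < m) (h7 : m ≤ 7) :
    (1 : ℝ) / m = ((420 / m : ℕ) : ℝ) / 420 := by
  interval_cases m <;> norm_num

lemma one_div_pattern_sum_le_four (b o : Fin 6 → Bool)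
    (hcenter : ∀ i, (b (i + 2) || b (i + 3) || b (i + 4) || o i) = true)
    (hring : ∀ i, (b (i - 1) || b (i + 2) || o i || o (i + 1)) = true) :
    1 / ((1 + ∑ i, (b i).toNat : ℕ) : ℝ) +
      ∑ i, 1 / ((1 + (b (i - 1)).toNat + (b i).toNat + (b (i + 1)).toNat + (o i).toNat : ℕ) : ℝ)
      ≤ 4 := by
  have hsum : ∑ i, (b i).toNat ≤ 6 := by
    simpa using Finset.sum_le_card_nsmul Finset.univ (fun i => (b i).toNat) 1
      fun i _ => Bool.toNat_le _
  have hring_le : ∀ i, 1 + (b (i - 1)).toNat + (b i).toNat + (b (i + 1)).toNat + (o i).toNat ≤ 7 :=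
    fun i => by
      have := Bool.toNat_le (b (i - 1)); have := Bool.toNat_le (b i)
      have := Bool.toNat_le (b (i + 1)); have := Bool.toNat_le (o i); omega
  rw [one_div_natCast_eq_div_420 (by omega) (by omega),
    Finset.sum_congr rfl fun i _ => one_div_natCast_eq_div_420 (by omega) (hring_le i),
    ← Finset.sum_div, ← add_div, div_le_iff₀ (by norm_num)]
  exact_mod_cast sharePatternBound b o hcenter hring

/-- In the triangular grid, the share of every codeword of a local identifying code
is at most `4`. -/
theorem stmt17 (C : Set (ℤ × ℤ)) (hC : IsLocalID triGrid C) (c : ℤ × ℤ) (hc : c ∈ C) :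
    share triGrid C c ≤ 4 := by
  calc share triGrid C c
      = 1 / (iset triGrid C c).ncard + ∑ i, 1 / ((iset triGrid C (c + hexDir i)).ncard : ℝ) :=
        share_triGrid C c
    _ ≤ 1 / ((1 + ∑ i, (nbrPattern C c i).toNat : ℕ) : ℝ) +
        ∑ i, 1 / ((1 + (nbrPattern C c (i - 1)).toNat + (nbrPattern C c i).toNat +
          (nbrPattern C c (i + 1)).toNat + (outerPattern C c i).toNat : ℕ) : ℝ) := by
        rw [ncard_iset_center hc]
        gcongr with i
        exact ncard_iset_hexDir_ge hc i
    _ ≤ 4 := one_div_pattern_sum_le_four _ _ (hC.pattern_center c) (hC.pattern_ring c)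
end
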